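/- Let p be an odd prime. The sequence a_n := 1 − ∏_{i=1}^∞ (1 − p^{−i}) · ( 1 + Σ_{j=1}^{n−1} p^{−j²} ∏_{k=1}^{j} (1 − p^{−k})^{−2} ) tends to 0 as n → ∞. -/

import Mathlib

open Finset Filter Topology

noncomputable def Pq (q : ℝ) (n : ℕ) : ℝ := ∏ k ∈ Finset.range n, (1 - q ^ (k + 1))

lemma Pq_zero (q : ℝ) : Pq q 0 = 1 := by simp [Pq]

lemma Pq_succ (q : ℝ) (n : ℕ) : Pq q (n + 1) = Pq q n * (1 - q ^ (n + 1)) :=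
  Finset.prod_range_succ _ _

lemma Pq_pos {q : ℝ} (hq0 : 0 ≤ q) (hq1 : q < 1) (n : ℕ) : 0 < Pq q n := by
  refine Finset.prod_pos fun k _ => ?_
  have : q ^ (k+1) < 1 := pow_lt_one₀ hq0 hq1 (by omega)
  linarith

lemma Pq_ne {q : ℝ} (hq0 : 0 ≤ q) (hq1 : q < 1) (n : ℕ) : Pq q n ≠ 0 :=
  (Pq_pos hq0 hq1 n).ne'

lemma Pq_le_one {q : ℝ} (hq0 : 0 ≤ q) (hq1 : q < 1) (n : ℕ) : Pq q n ≤ 1 := by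
  refine Finset.prod_le_one (fun k _ => ?_) (fun k _ => ?_)
  · have : q ^ (k+1) < 1 := pow_lt_one₀ hq0 hq1 (by omega); linarith
  · have := pow_nonneg hq0 (k + 1); linarith

lemma Pq_anti {q : ℝ} (hq0 : 0 ≤ q) (hq1 : q < 1) : Antitone (Pq q) := by
  refine antitone_nat_of_succ_le fun n => ?_
  rw [Pq_succ]
  have h1 := Pq_pos hq0 hq1 n
  have h2 := pow_nonneg hq0 (n + 1)
  nlinarith

/-- Finite Durfee rectangle identity. -/
lemma Pq_key {q : ℝ} (hq0 : 0 < q) (hq1 : q < 1) :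
    ∀ n m : ℕ, ∑ j ∈ Finset.range (n + 1),
      q ^ (j * (j + m)) / (Pq q j * Pq q (n - j) * Pq q (j + m))
      = 1 / (Pq q n * Pq q (n + m)) := by
  have hne := Pq_ne hq0.le hq1
  have hone : ∀ k : ℕ, (1 : ℝ) - q ^ (k + 1) ≠ 0 := by
    intro k
    have : q ^ (k+1) < 1 := pow_lt_one₀ hq0.le hq1 (by omega)
    intro h; linarith
  intro n
  induction n with
  | zero => intro m; simp [Pq_zero]
  | succ n ih =>
    intro m
    rw [Finset.sum_range_succ, Finset.sum_range_succ']
    have hmid : ∀ i ∈ Finset.range n,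
        q ^ ((i + 1) * (i + 1 + m)) /
            (Pq q (i + 1) * Pq q (n + 1 - (i + 1)) * Pq q (i + 1 + m))
        = (1 - q ^ (n + 1))⁻¹ *
          (q ^ ((i + 1) * (i + 1 + m)) /
              (Pq q (i + 1) * Pq q (n - (i + 1)) * Pq q (i + 1 + m))
           + q ^ (n + m + 1) *
              (q ^ (i * (i + (m + 1))) /
                (Pq q i * Pq q (n - i) * Pq q (i + (m + 1))))) := by
      intro i hi
      rw [Finset.mem_range] at hi
      obtain ⟨d, rfl⟩ : ∃ d, n = i + d + 1 := ⟨n - i - 1, by omega⟩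
      rw [show i + d + 1 + 1 - (i + 1) = d + 1 by omega,
          show i + d + 1 - (i + 1) = d by omega,
          show i + d + 1 - i = d + 1 by omega,
          show i + (m + 1) = i + 1 + m by omega]
      rw [Pq_succ q i, Pq_succ q d]
      have h1 := hne i; have h2 := hne d; have h3 := hne (i + 1 + m)
      have h4 := hone i; have h5 := hone d; have h6 := hone (i + d + 1)
      field_simp
      ring
    rw [Finset.sum_congr rfl hmid]
    have hSA : ∑ i ∈ Finset.range n,
        q ^ ((i + 1) * (i + 1 + m)) /
          (Pq q (i + 1) * Pq q (n - (i + 1)) * Pq q (i + 1 + m))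
        = 1 / (Pq q n * Pq q (n + m)) - 1 / (Pq q n * Pq q m) := by
      have h := ih m
      rw [Finset.sum_range_succ'] at h
      simp only [Nat.sub_zero, Nat.zero_mul, zero_mul, pow_zero, Pq_zero, one_mul,
        Nat.zero_add, zero_add] at h
      linarith
    have hSU : ∑ i ∈ Finset.range n,
        q ^ (i * (i + (m + 1))) / (Pq q i * Pq q (n - i) * Pq q (i + (m + 1)))
        = 1 / (Pq q n * Pq q (n + (m + 1)))
          - q ^ (n * (n + (m + 1))) / (Pq q n * Pq q (n + (m + 1))) := by
      have h := ih (m + 1)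
      rw [Finset.sum_range_succ] at h
      simp only [Nat.sub_self, Pq_zero, mul_one, one_mul] at h
      linarith
    rw [← Finset.mul_sum, Finset.sum_add_distrib, ← Finset.mul_sum, hSA, hSU]
    rw [show n + (m + 1) = n + m + 1 by omega, show n + 1 + m = n + m + 1 by omega]
    simp only [Nat.sub_zero, Nat.sub_self, Nat.zero_mul, zero_mul, pow_zero, Pq_zero,
      one_mul, mul_one, Nat.zero_add, zero_add]
    rw [Pq_succ q n, Pq_succ q (n + m)]
    have h1 := hne n; have h2 := hne m; have h3 := hne (n + m)
    have h4 := hone n; have h5 := hone (n + m)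
    field_simp
    ring

lemma Pq_multipliable {q : ℝ} (hq0 : 0 ≤ q) (hq1 : q < 1) :
    Multipliable (fun i : ℕ => 1 - q ^ (i + 1)) := by
  have hpos : ∀ i : ℕ, 0 < 1 - q ^ (i + 1) := by
    intro i
    have : q ^ (i + 1) < 1 := pow_lt_one₀ hq0 hq1 (by omega)
    linarith
  refine ⟨⨅ s : Finset ℕ, ∏ i ∈ s, (1 - q ^ (i + 1)), tendsto_atTop_ciInf ?_ ?_⟩
  · intro s t hst
    simp only []
    rw [← Finset.prod_sdiff hst]
    have h1 : ∏ i ∈ t \ s, (1 - q ^ (i + 1)) ≤ 1 := by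
      refine Finset.prod_le_one (fun k _ => (hpos k).le) (fun k _ => ?_)
      have := pow_nonneg hq0 (k + 1); linarith
    have h2 : (0:ℝ) ≤ ∏ i ∈ s, (1 - q ^ (i + 1)) :=
      Finset.prod_nonneg fun k _ => (hpos k).le
    nlinarith
  · refine ⟨0, fun x hx => ?_⟩
    obtain ⟨s, rfl⟩ := hx
    exact Finset.prod_nonneg fun k _ => (hpos k).le

lemma Pq_tendsto {q : ℝ} (hq0 : 0 ≤ q) (hq1 : q < 1) :
    Tendsto (fun n => Pq q n) atTop (𝓝 (∏' i : ℕ, (1 - q ^ (i + 1)))) := by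
  simpa [Pq] using Multipliable.tendsto_prod_tprod_nat (Pq_multipliable hq0 hq1)

lemma Pq_ge_half {q : ℝ} (hq0 : 0 ≤ q) (hq3 : q ≤ 1/3) (n : ℕ) : 1/2 ≤ Pq q n := by
  have hq1 : q < 1 := by linarith
  have hW : ∀ k : ℕ, 1 - ∑ i ∈ Finset.range k, q ^ (i + 1) ≤ Pq q k := by
    intro k
    induction k with
    | zero => simp [Pq_zero]
    | succ k ih =>
      rw [Pq_succ, Finset.sum_range_succ]
      have h1 : 0 ≤ q ^ (k + 1) := pow_nonneg hq0 _
      have h2 : q ^ (k + 1) < 1 := pow_lt_one₀ hq0 hq1 (by omega)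
      have h3 : 0 ≤ ∑ i ∈ Finset.range k, q ^ (i + 1) :=
        Finset.sum_nonneg fun i _ => pow_nonneg hq0 _
      nlinarith
  have hgeom : ∑ i ∈ Finset.range n, q ^ (i + 1) ≤ 1/2 := by
    have he : ∑ i ∈ Finset.range n, q ^ (i + 1) = q * ∑ i ∈ Finset.range n, q ^ i := by
      rw [Finset.mul_sum]
      exact Finset.sum_congr rfl fun i _ => by ring
    have hgs : ∑ i ∈ Finset.range n, q ^ i = (q ^ n - 1) / (q - 1) := geom_sum_eq (by linarith) n
    have hqn : 0 ≤ q ^ n := pow_nonneg hq0 _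
    have hq1' : (0:ℝ) < 1 - q := by linarith
    have : ∑ i ∈ Finset.range n, q ^ i ≤ 3/2 := by
      rw [hgs, div_le_iff_of_neg (by linarith : q - 1 < 0)]
      nlinarith
    rw [he]
    nlinarith
  have := hW n
  linarith

lemma Pq_inf_le {q : ℝ} (hq0 : 0 ≤ q) (hq1 : q < 1) (n : ℕ) :
    (∏' i : ℕ, (1 - q ^ (i + 1))) ≤ Pq q n := by
  refine le_of_tendsto (Pq_tendsto hq0 hq1) ?_
  filter_upwards [eventually_ge_atTop n] with k hk
  exact Pq_anti hq0 hq1 hk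

lemma Pq_main {q : ℝ} (hq0 : 0 < q) (hq3 : q ≤ 1/3) :
    Tendsto (fun n : ℕ => (∏' i : ℕ, (1 - q ^ (i + 1))) *
      ∑ j ∈ Finset.range (n + 1), q ^ (j * j) * ((Pq q j)⁻¹) ^ 2) atTop (𝓝 1) := by
  have hq1 : q < 1 := by linarith
  set Q : ℝ := ∏' i : ℕ, (1 - q ^ (i + 1)) with hQ
  have hQpos : 0 < Q := lt_of_lt_of_le (by norm_num)
    (ge_of_tendsto' (Pq_tendsto hq0.le hq1) (fun n => Pq_ge_half hq0.le hq3 n))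
  have hQle : ∀ n, Q ≤ Pq q n := Pq_inf_le hq0.le hq1
  have hPpos := Pq_pos hq0.le hq1
  have hPne := Pq_ne hq0.le hq1
  have hkey : ∀ n : ℕ, ∑ j ∈ Finset.range (n + 1),
      q ^ (j * j) / (Pq q j * Pq q (n - j) * Pq q j) = 1 / (Pq q n * Pq q n) := by
    intro n
    have h := Pq_key hq0 hq1 n 0
    simpa using h
  -- lower bound
  have hlow : ∀ n : ℕ, Q * (Q * (1 / (Pq q n * Pq q n)))
      ≤ Q * ∑ j ∈ Finset.range (n + 1), q ^ (j * j) * ((Pq q j)⁻¹) ^ 2 := by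
    intro n
    refine mul_le_mul_of_nonneg_left ?_ hQpos.le
    rw [← hkey n, Finset.mul_sum]
    refine Finset.sum_le_sum fun j hj => ?_
    have hqj : 0 ≤ q ^ (j * j) := pow_nonneg hq0.le _
    rw [div_eq_mul_inv, mul_inv, mul_inv]
    have hle : Q * (Pq q (n - j))⁻¹ ≤ 1 := by
      rw [← div_eq_mul_inv, div_le_one (hPpos _)]
      exact hQle _
    have h2 : ((Pq q j)⁻¹) ^ 2 = (Pq q j)⁻¹ * (Pq q j)⁻¹ := sq (Pq q j)⁻¹ ▸ by ring
    calc Q * (q ^ (j * j) * ((Pq q j)⁻¹ * (Pq q (n - j))⁻¹ * (Pq q j)⁻¹))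
        = (q ^ (j * j) * ((Pq q j)⁻¹ * (Pq q j)⁻¹)) * (Q * (Pq q (n - j))⁻¹) := by ring
      _ ≤ (q ^ (j * j) * ((Pq q j)⁻¹ * (Pq q j)⁻¹)) * 1 := by
          refine mul_le_mul_of_nonneg_left hle
            (mul_nonneg hqj (mul_nonneg (inv_nonneg.2 (hPpos j).le) (inv_nonneg.2 (hPpos j).le)))
      _ = q ^ (j * j) * ((Pq q j)⁻¹) ^ 2 := by ring
  -- upper bound
  have hup : ∀ n : ℕ, Q * ∑ j ∈ Finset.range (n + 1), q ^ (j * j) * ((Pq q j)⁻¹) ^ 2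
      ≤ Q * (Pq q (n / 2) * (1 / (Pq q n * Pq q n))
          + ((n / 2 : ℕ) : ℝ) * (q ^ (n / 2 + 1) * ((Q)⁻¹) ^ 2)) := by
    intro n
    refine mul_le_mul_of_nonneg_left ?_ hQpos.le
    set m : ℕ := n / 2 with hm
    have hmn : m ≤ n := Nat.div_le_self n 2
    have hm2 : m ≤ n - m := by omega
    have hsplit : ∑ j ∈ Finset.range (n + 1), q ^ (j * j) * ((Pq q j)⁻¹) ^ 2
        = (∑ j ∈ Finset.range (n - m + 1), q ^ (j * j) * ((Pq q j)⁻¹) ^ 2)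
          + ∑ j ∈ Finset.Ico (n - m + 1) (n + 1), q ^ (j * j) * ((Pq q j)⁻¹) ^ 2 := by
      rw [Finset.range_eq_Ico,
        ← Finset.sum_Ico_consecutive _ (Nat.zero_le _) (by omega : n - m + 1 ≤ n + 1),
        ← Finset.range_eq_Ico]
    rw [hsplit]
    have hpart1 : ∑ j ∈ Finset.range (n - m + 1), q ^ (j * j) * ((Pq q j)⁻¹) ^ 2
        ≤ Pq q m * (1 / (Pq q n * Pq q n)) := by
      rw [← hkey n, Finset.mul_sum]
      calc ∑ j ∈ Finset.range (n - m + 1), q ^ (j * j) * ((Pq q j)⁻¹) ^ 2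
          ≤ ∑ j ∈ Finset.range (n - m + 1),
              Pq q m * (q ^ (j * j) / (Pq q j * Pq q (n - j) * Pq q j)) := by
            refine Finset.sum_le_sum fun j hj => ?_
            rw [Finset.mem_range] at hj
            have hj' : j ≤ n - m := by omega
            have hmon : Pq q (n - j) ≤ Pq q m := Pq_anti hq0.le hq1 (by omega)
            have hqj : 0 ≤ q ^ (j * j) := pow_nonneg hq0.le _
            rw [div_eq_mul_inv, mul_inv, mul_inv, sq]
            calc q ^ (j * j) * ((Pq q j)⁻¹ * (Pq q j)⁻¹)
                = (q ^ (j * j) * ((Pq q j)⁻¹ * (Pq q j)⁻¹ * (Pq q (n - j))⁻¹)) * Pq q (n - j) := by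
                  have hb := hPne (n - j)
                  field_simp
              _ ≤ (q ^ (j * j) * ((Pq q j)⁻¹ * (Pq q j)⁻¹ * (Pq q (n - j))⁻¹)) * Pq q m := by
                  refine mul_le_mul_of_nonneg_left hmon
                    (mul_nonneg hqj (mul_nonneg (mul_nonneg (inv_nonneg.2 (hPpos j).le)
                      (inv_nonneg.2 (hPpos j).le)) (inv_nonneg.2 (hPpos (n - j)).le)))
              _ = Pq q m * (q ^ (j * j) * ((Pq q j)⁻¹ * (Pq q (n - j))⁻¹ * (Pq q j)⁻¹)) := by
                  ring
        _ ≤ ∑ j ∈ Finset.range (n + 1),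
              Pq q m * (q ^ (j * j) / (Pq q j * Pq q (n - j) * Pq q j)) := by
            refine Finset.sum_le_sum_of_subset_of_nonneg
              (Finset.range_subset_range.2 (by omega)) fun j _ _ =>
              mul_nonneg (hPpos m).le (div_nonneg (pow_nonneg hq0.le _)
                (mul_nonneg (mul_nonneg (hPpos j).le (hPpos (n - j)).le) (hPpos j).le))
  -- part 2
    have hpart2 : ∑ j ∈ Finset.Ico (n - m + 1) (n + 1), q ^ (j * j) * ((Pq q j)⁻¹) ^ 2
        ≤ ((m : ℕ) : ℝ) * (q ^ (m + 1) * ((Q)⁻¹) ^ 2) := by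
      have hcard : (Finset.Ico (n - m + 1) (n + 1)).card = m := by
        rw [Nat.card_Ico]; omega
      calc ∑ j ∈ Finset.Ico (n - m + 1) (n + 1), q ^ (j * j) * ((Pq q j)⁻¹) ^ 2
          ≤ ∑ _j ∈ Finset.Ico (n - m + 1) (n + 1), q ^ (m + 1) * ((Q)⁻¹) ^ 2 := by
            refine Finset.sum_le_sum fun j hj => ?_
            rw [Finset.mem_Ico] at hj
            have h1 : q ^ (j * j) ≤ q ^ (m + 1) := by
              refine pow_le_pow_of_le_one hq0.le hq1.le ?_
              have : m + 1 ≤ j := by omega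
              nlinarith
            have h2 : ((Pq q j)⁻¹) ^ 2 ≤ ((Q)⁻¹) ^ 2 := by
              have hinv : (Pq q j)⁻¹ ≤ Q⁻¹ := by
                rw [inv_le_inv₀ (hPpos j) hQpos]
                exact hQle j
              exact pow_le_pow_left₀ (inv_nonneg.2 (hPpos j).le) hinv 2
            have hq1j : 0 ≤ q ^ (j * j) := pow_nonneg hq0.le _
            have hp2 : (0:ℝ) ≤ ((Pq q j)⁻¹) ^ 2 := by positivity
            nlinarith [pow_nonneg hq0.le (m + 1), sq_nonneg (Q)⁻¹]
        _ = ((m : ℕ) : ℝ) * (q ^ (m + 1) * ((Q)⁻¹) ^ 2) := by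
            rw [Finset.sum_const, hcard, nsmul_eq_mul]
    linarith
  -- limits of the bounds
  have hPT := Pq_tendsto hq0.le hq1
  have hQne : Q ≠ 0 := hQpos.ne'
  have hlowlim : Tendsto (fun n : ℕ => Q * (Q * (1 / (Pq q n * Pq q n)))) atTop (𝓝 1) := by
    have h1 : Tendsto (fun n : ℕ => Pq q n * Pq q n) atTop (𝓝 (Q * Q)) := hPT.mul hPT
    have h2 := (tendsto_const_nhds (x := Q)).mul
      ((tendsto_const_nhds (x := Q)).mul ((tendsto_const_nhds (x := (1:ℝ))).div h1 (by positivity)))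
    convert h2 using 2
    · rfl
    · field_simp
  have hdiv2 : Tendsto (fun n : ℕ => n / 2) atTop atTop := by
    refine tendsto_atTop_atTop.2 fun b => ⟨2 * b, fun a ha => ?_⟩
    omega
  have hkq : Tendsto (fun k : ℕ => ((k : ℕ) : ℝ) * q ^ (k + 1)) atTop (𝓝 0) := by
    have hnorm : ‖q‖ < 1 := by rw [Real.norm_eq_abs, abs_of_nonneg hq0.le]; exact hq1
    have h := (summable_pow_mul_geometric_of_norm_lt_one 1 hnorm).tendsto_atTop_zero
    have h2 := h.mul_const q
    simpa [pow_succ, mul_comm, mul_assoc, mul_left_comm] using h2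
  have huplim : Tendsto (fun n : ℕ => Q * (Pq q (n / 2) * (1 / (Pq q n * Pq q n))
      + ((n / 2 : ℕ) : ℝ) * (q ^ (n / 2 + 1) * ((Q)⁻¹) ^ 2))) atTop (𝓝 1) := by
    have h1 : Tendsto (fun n : ℕ => Pq q (n / 2)) atTop (𝓝 Q) := hPT.comp hdiv2
    have h2 : Tendsto (fun n : ℕ => Pq q n * Pq q n) atTop (𝓝 (Q * Q)) := hPT.mul hPT
    have h3 : Tendsto (fun n : ℕ => Pq q (n / 2) * (1 / (Pq q n * Pq q n))) atTop
        (𝓝 (Q * (1 / (Q * Q)))) :=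
      h1.mul ((tendsto_const_nhds (x := (1:ℝ))).div h2 (by positivity))
    have h4 : Tendsto (fun n : ℕ => ((n / 2 : ℕ) : ℝ) * q ^ (n / 2 + 1)) atTop (𝓝 0) :=
      hkq.comp hdiv2
    have h5 : Tendsto (fun n : ℕ => ((n / 2 : ℕ) : ℝ) * (q ^ (n / 2 + 1) * ((Q)⁻¹) ^ 2))
        atTop (𝓝 0) := by
      have := h4.mul_const ((Q)⁻¹ ^ 2)
      simpa [mul_assoc] using this
    have h6 := (tendsto_const_nhds (x := Q)).mul (h3.add h5)
    convert h6 using 2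
    field_simp
    simp
  exact tendsto_of_tendsto_of_tendsto_of_le_of_le hlowlim huplim hlow hup

/-- For an odd prime `p`, the sequence
`a_n = 1 − ∏_{i=1}^∞ (1 − p^{−i}) · (1 + Σ_{j=1}^{n−1} p^{−j²} ∏_{k=1}^{j} (1 − p^{−k})^{−2})`
tends to `0` as `n → ∞`. -/
theorem cl_density_lower_bound_tendsto_zero (p : ℕ) (hp : p.Prime) (hodd : Odd p) :
    Filter.Tendsto
      (fun n : ℕ =>
        1 - (∏' i : ℕ, (1 - ((p : ℝ) ^ (i + 1))⁻¹)) *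
          (1 + ∑ j ∈ Finset.range (n - 1),
            ((p : ℝ) ^ ((j + 1) ^ 2))⁻¹ *
              ((∏ k ∈ Finset.range (j + 1), (1 - ((p : ℝ) ^ (k + 1))⁻¹))⁻¹) ^ 2))
      Filter.atTop (nhds 0) := by
  set q : ℝ := ((p : ℝ))⁻¹ with hq
  have hp3 : 3 ≤ p := by
    have h2 := hp.two_le
    rcases Nat.lt_or_ge p 3 with h | h
    · interval_cases p <;> first | exact absurd hodd (by decide) | omega
    · exact h
  have hp3' : (3 : ℝ) ≤ (p : ℝ) := by exact_mod_cast hp3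
  have hppos : (0 : ℝ) < (p : ℝ) := by linarith
  have hq0 : 0 < q := by rw [hq]; positivity
  have hq3 : q ≤ 1/3 := by
    rw [hq, inv_le_comm₀ hppos (by norm_num)]
    norm_num
    linarith
  have hq1 : q < 1 := by linarith
  -- rewrite the statement in terms of q
  have hcast : ∀ k : ℕ, ((p : ℝ) ^ (k + 1))⁻¹ = q ^ (k + 1) := fun k => by
    rw [hq, inv_pow]
  have hcast2 : ∀ j : ℕ, ((p : ℝ) ^ ((j + 1) ^ 2))⁻¹ = q ^ ((j + 1) * (j + 1)) := fun j => by
    rw [hq, inv_pow, pow_two]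
  have hmain := Pq_main hq0 hq3
  have hsub : Tendsto (fun n : ℕ =>
      1 - (∏' i : ℕ, (1 - q ^ (i + 1))) *
        ∑ j ∈ Finset.range (n + 1), q ^ (j * j) * ((Pq q j)⁻¹) ^ 2) atTop (𝓝 0) := by
    have h := (tendsto_const_nhds (x := (1:ℝ))).sub hmain
    simpa using h
  rw [← Filter.tendsto_add_atTop_iff_nat 1]
  refine hsub.congr fun n => ?_
  simp only [Nat.add_sub_cancel, hcast, hcast2,
    show ∀ n : ℕ, ∏ k ∈ Finset.range n, (1 - q ^ (k + 1)) = Pq q n from fun n => rfl]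
  rw [Finset.sum_range_succ']
  simp only [Pq_zero, inv_one, one_pow, mul_one, pow_zero, Nat.zero_mul, zero_mul,
    Nat.zero_add, zero_add, inv_pow]
  ring
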